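/- Assume the cocycle c is real, i.e. ⟨c(S(y*)), c((S(x))*)⟩ = ⟨c(x), c(y)⟩ for all x, y ∈ A. Then c(1) = 0, and for every x ∈ A with ε(x) = 0 and every pair of finite families (pⱼ)ⱼ, (qⱼ)ⱼ in A with Δ(x*x) = Σⱼ pⱼ ⊗ qⱼ, one has Σⱼ ⟨c(pⱼ), c(S(qⱼ*))⟩ = −2‖c(x)‖². (In particular, the functional ψ defined by ψ(x) = Σᵢ ⟨c(yᵢ), c(S(zᵢ*))⟩ whenever Δx = Σᵢ yᵢ ⊗ zᵢ is normalized, ψ(1) = 0, and conditionally negative: ψ(x*x) ≤ 0 for all x in the kernel of ε.) -/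

import Mathlib

/-!
Let `ψ(a) = Σ ⟨c(yᵢ), c(S(zᵢ*))⟩` for `Δa = Σ yᵢ ⊗ zᵢ`. The key identity is
`ψ(ab) = ε(a)ψ(b) + ε(b)ψ(a) - 2⟨c(b), c(a*)⟩`. Writing `Δb = Σ uₖ ⊗ vₖ`, one has
`S((zᵢvₖ)*) = S(zᵢ*) S(vₖ*)`, and the cocycle identity splits every term of `ψ(ab)` into four.
After summing over `i`, the antipode identity `Σ yᵢ* S(zᵢ*) = ε(a*) 1` collapses the four sums to
`ε(a)ψ(b)`, `-⟨c(b), c(a*)⟩`, `-⟨c((S(a*))*), c(S(b*))⟩` and `ε(b)ψ(a)`. Reality of `c` makes the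
third sum equal to the second. For `a = x*`, `b = x` and `ε(x) = 0` this gives
`ψ(x*x) = -2‖c(x)‖²`.
-/

open scoped TensorProduct InnerProductSpace
open Coalgebra HopfAlgebra

theorem TensorProduct.exists_fin_sum_tmul {R M N : Type*} [CommSemiring R] [AddCommMonoid M]
    [AddCommMonoid N] [Module R M] [Module R N] (x : M ⊗[R] N) :
    ∃ (n : ℕ) (y : Fin n → M) (z : Fin n → N), x = ∑ i, y i ⊗ₜ[R] z i := by
  obtain ⟨s, rfl⟩ := TensorProduct.exists_finset (R := R) x
  refine ⟨s.card, fun i => (s.equivFin.symm i).1.1, fun i => (s.equivFin.symm i).1.2, ?_⟩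
  rw [← Finset.sum_coe_sort s]
  exact (Equiv.sum_comp s.equivFin.symm fun p => (p : M × N).1 ⊗ₜ[R] (p : M × N).2).symm

namespace Coalgebra

variable {R A ι : Type*} [CommSemiring R] [AddCommMonoid A] [Module R A] [Coalgebra R A]
  [Fintype ι] {a : A} {y z : ι → A}

def Repr.ofComulEq (h : comul (R := R) a = ∑ i, y i ⊗ₜ[R] z i) : Repr R a ι :=
  ⟨Finset.univ, y, z, h.symm⟩

theorem sum_counit_smul_of_comul_eq (h : comul (R := R) a = ∑ i, y i ⊗ₜ[R] z i) :
    ∑ i, counit (R := R) (y i) • z i = a :=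
  sum_counit_smul (Repr.ofComulEq h)

theorem sum_smul_counit_of_comul_eq (h : comul (R := R) a = ∑ i, y i ⊗ₜ[R] z i) :
    ∑ i, counit (R := R) (z i) • y i = a := by
  have := congr(_root_.TensorProduct.rid R A $(sum_tmul_counit_eq (Repr.ofComulEq h)))
  simp only [map_sum, _root_.TensorProduct.rid_tmul, one_smul] at this
  exact this

theorem sum_counit_mul_counit_of_comul_eq (h : comul (R := R) a = ∑ i, y i ⊗ₜ[R] z i) :
    ∑ i, counit (R := R) (y i) * counit (R := R) (z i) = counit a := by
  simpa using congr(counit (R := R) $(sum_counit_smul_of_comul_eq h))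

end Coalgebra

theorem Bialgebra.comul_mul_of_comul_eq {R A ι κ : Type*} [CommSemiring R] [Semiring A]
    [Bialgebra R A] [Fintype ι] [Fintype κ] {a b : A} {y z : ι → A} {u v : κ → A}
    (ha : comul (R := R) a = ∑ i, y i ⊗ₜ[R] z i) (hb : comul (R := R) b = ∑ k, u k ⊗ₜ[R] v k) :
    comul (R := R) (a * b) = ∑ p : ι × κ, (y p.1 * u p.2) ⊗ₜ[R] (z p.1 * v p.2) := by
  simp [Bialgebra.comul_mul, ha, hb, Finset.sum_mul_sum, Fintype.sum_prod_type]

theorem HopfAlgebra.sum_mul_antipode_of_comul_eq {R A ι : Type*} [CommSemiring R] [Semiring A]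
    [HopfAlgebra R A] [Fintype ι] {a : A} {y z : ι → A}
    (h : comul (R := R) a = ∑ i, y i ⊗ₜ[R] z i) :
    ∑ i, y i * antipode R (z i) = counit (R := R) a • 1 :=
  sum_mul_antipode_eq_smul (Repr.ofComulEq h)

theorem StarAlgHom.inner_map_star_apply_left {A H : Type*} [Semiring A] [Algebra ℂ A] [Star A]
    [NormedAddCommGroup H] [InnerProductSpace ℂ H] [CompleteSpace H]
    (π : A →⋆ₐ[ℂ] (H →L[ℂ] H)) (a : A) (u v : H) :
    ⟪π (star a) u, v⟫_ℂ = ⟪u, π a v⟫_ℂ := by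
  rw [map_star, ContinuousLinearMap.star_eq_adjoint, ContinuousLinearMap.adjoint_inner_left]

local notation "ε" => Coalgebra.counit (R := ℂ)
local notation "𝑺" => HopfAlgebra.antipode ℂ

section Pairing

variable {A : Type*} [Ring A] [HopfAlgebra ℂ A] [StarRing A] [StarModule ℂ A]
  {H : Type*} [NormedAddCommGroup H] [InnerProductSpace ℂ H]

theorem sum_star_counit_smul_antipode_star {ι : Type*} [Fintype ι] {a : A} {y z : ι → A}
    (h : comul (R := ℂ) a = ∑ i, y i ⊗ₜ[ℂ] z i) :
    ∑ i, star (ε (y i)) • 𝑺 (star (z i)) = 𝑺 (star a) := by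
  conv_rhs => rw [← sum_counit_smul_of_comul_eq h]
  simp only [star_sum, star_smul, map_sum, map_smul]

noncomputable def cocyclePairing (c : A →ₗ[ℂ] H) : A →ₗ[ℂ] A →ₗ[ℂ] ℂ :=
  LinearMap.mk₂ ℂ (fun p q => ⟪c (𝑺 (star q)), c p⟫_ℂ)
    (fun _ _ _ => by simp only [map_add, inner_add_right])
    (fun _ _ _ => by simp only [map_smul, inner_smul_right, smul_eq_mul])
    (fun _ _ _ => by simp only [star_add, map_add, inner_add_left])
    (fun _ _ _ => by
      simp only [star_smul, map_smul, inner_smul_left, starRingEnd_apply, star_star, smul_eq_mul])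

-- The functional `ψ` of the paper.
noncomputable def cocycleGenerator (c : A →ₗ[ℂ] H) : A →ₗ[ℂ] ℂ :=
  TensorProduct.lift (cocyclePairing c) ∘ₗ comul

theorem cocycleGenerator_eq_sum (c : A →ₗ[ℂ] H) {ι : Type*} [Fintype ι] {a : A} {y z : ι → A}
    (h : comul (R := ℂ) a = ∑ i, y i ⊗ₜ[ℂ] z i) :
    cocycleGenerator c a = ∑ i, ⟪c (𝑺 (star (z i))), c (y i)⟫_ℂ := by
  simp [cocycleGenerator, h, cocyclePairing]

end Pairing

section Cocycle

variable {A : Type*} [Ring A] [HopfAlgebra ℂ A] [StarRing A]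
  {H : Type*} [NormedAddCommGroup H] [InnerProductSpace ℂ H] [CompleteSpace H]

def IsCocycle (π : A →⋆ₐ[ℂ] (H →L[ℂ] H)) (c : A →ₗ[ℂ] H) : Prop :=
  ∀ x y : A, c (x * y) = π x (c y) + ε y • c x

namespace IsCocycle

variable {π : A →⋆ₐ[ℂ] (H →L[ℂ] H)} {c : A →ₗ[ℂ] H}

theorem map_one_eq_zero (hc : IsCocycle π c) : c 1 = 0 := by
  simpa [Bialgebra.counit_one] using hc 1 1

theorem apply_eq_sub (hc : IsCocycle π c) (a b : A) : π a (c b) = c (a * b) - ε b • c a :=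
  eq_sub_of_add_eq (hc a b).symm

theorem sum_map_star_apply_antipode_star (hc : IsCocycle π c) {ι : Type*} [Fintype ι] {a : A}
    {y z : ι → A} (hstar : comul (R := ℂ) (star a) = ∑ i, star (y i) ⊗ₜ[ℂ] star (z i)) :
    ∑ i, π (star (y i)) (c (𝑺 (star (z i)))) = -c (star a) := by
  simp_rw [hc.apply_eq_sub, Finset.sum_sub_distrib, counit_antipode, ← map_smul, ← map_sum,
    sum_mul_antipode_of_comul_eq hstar, sum_smul_counit_of_comul_eq hstar, map_smul,
    hc.map_one_eq_zero, smul_zero, zero_sub]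

theorem inner_antipode_star_mul_mul (hc : IsCocycle π c)
    (hεstar : ∀ x : A, ε (star x) = starRingEnd ℂ (ε x)) (p p' q q' : A) :
    ⟪c (𝑺 (star (q * q'))), c (p * p')⟫_ℂ =
      ⟪π (star p * 𝑺 (star q)) (c (𝑺 (star q'))), c p'⟫_ℂ
        + ε q' * ⟪π (star p) (c (𝑺 (star q))), c p'⟫_ℂ
        + ε p' * ⟪c (𝑺 (star q')), π (star (𝑺 (star q))) (c p)⟫_ℂ
        + ε p' * ε q' * ⟪c (𝑺 (star q)), c p⟫_ℂ := by
  rw [star_mul, antipode_mul_antidistrib, hc, hc, map_mul, mul_apply_eq_comp,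
    π.inner_map_star_apply_left, π.inner_map_star_apply_left,
    ← π.inner_map_star_apply_left (star (𝑺 (star q))), star_star, inner_add_left,
    inner_add_right, inner_add_right, inner_smul_left, inner_smul_left, inner_smul_right,
    inner_smul_right, counit_antipode, hεstar, Complex.conj_conj]
  ring

variable [StarModule ℂ A]

theorem sum_map_star_antipode_star_apply (hc : IsCocycle π c) {ι : Type*} [Fintype ι] {a : A}
    {y z : ι → A} (ha : comul (R := ℂ) a = ∑ i, y i ⊗ₜ[ℂ] z i)
    (hstar : comul (R := ℂ) (star a) = ∑ i, star (y i) ⊗ₜ[ℂ] star (z i)) :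
    ∑ i, π (star (𝑺 (star (z i)))) (c (y i)) = -c (star (𝑺 (star a))) := by
  have hmul : ∑ i, star (𝑺 (star (z i))) * y i = star (ε (star a) • (1 : A)) := by
    simp [← sum_mul_antipode_of_comul_eq hstar, star_sum]
  have hsmul : ∑ i, ε (y i) • star (𝑺 (star (z i))) = star (𝑺 (star a)) := by
    simp [← sum_star_counit_smul_antipode_star ha, star_sum, star_smul]
  simp_rw [hc.apply_eq_sub, Finset.sum_sub_distrib, ← map_smul, ← map_sum, hmul, hsmul, star_smul,
    star_one, map_smul, hc.map_one_eq_zero, smul_zero, zero_sub]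

theorem cocycleGenerator_mul (hc : IsCocycle π c)
    (hΔstar : ∀ (x : A) (m : ℕ) (y z : Fin m → A),
      comul (R := ℂ) x = ∑ i, y i ⊗ₜ[ℂ] z i →
      comul (R := ℂ) (star x) = ∑ i, star (y i) ⊗ₜ[ℂ] star (z i))
    (hεstar : ∀ x : A, ε (star x) = starRingEnd ℂ (ε x))
    (hreal : ∀ x y : A, ⟪c (star (𝑺 x)), c (𝑺 (star y))⟫_ℂ = ⟪c y, c x⟫_ℂ) (a b : A) :
    cocycleGenerator c (a * b) =
      ε a * cocycleGenerator c b + ε b * cocycleGenerator c a - 2 * ⟪c (star a), c b⟫_ℂ := by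
  obtain ⟨n, y, z, ha⟩ := TensorProduct.exists_fin_sum_tmul (comul (R := ℂ) a)
  obtain ⟨m, u, v, hb⟩ := TensorProduct.exists_fin_sum_tmul (comul (R := ℂ) b)
  have hstar := hΔstar a n y z ha
  rw [cocycleGenerator_eq_sum c (Bialgebra.comul_mul_of_comul_eq ha hb), Fintype.sum_prod_type]
  simp only [hc.inner_antipode_star_mul_mul hεstar, Finset.sum_add_distrib]
  have h₁ : ∑ i, ∑ k, ⟪π (star (y i) * 𝑺 (star (z i))) (c (𝑺 (star (v k)))), c (u k)⟫_ℂ =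
      ε a * cocycleGenerator c b := by
    rw [Finset.sum_comm]
    simp_rw [← sum_inner, ← sum_apply, ← map_sum]
    rw [sum_mul_antipode_of_comul_eq hstar]
    simp_rw [hεstar, map_smul, map_one, smul_apply, one_apply_eq_self, inner_smul_left,
      Complex.conj_conj, ← Finset.mul_sum, cocycleGenerator_eq_sum c hb]
  have h₂ : ∑ i, ∑ k, ε (v k) * ⟪π (star (y i)) (c (𝑺 (star (z i)))), c (u k)⟫_ℂ =
      -⟪c (star a), c b⟫_ℂ := by
    simp_rw [← inner_smul_right, ← inner_sum, ← map_smul, ← map_sum,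
      sum_smul_counit_of_comul_eq hb, ← sum_inner, hc.sum_map_star_apply_antipode_star hstar,
      inner_neg_left]
  have h₃ : ∑ i, ∑ k, ε (u k) * ⟪c (𝑺 (star (v k))), π (star (𝑺 (star (z i)))) (c (y i))⟫_ℂ =
      -⟪c (star a), c b⟫_ℂ := by
    rw [Finset.sum_comm]
    have hreal' : ⟪c (𝑺 (star b)), c (star (𝑺 (star a)))⟫_ℂ = ⟪c (star a), c b⟫_ℂ := by
      rw [← inner_conj_symm, hreal, inner_conj_symm]
    simp_rw [← Finset.mul_sum, ← inner_sum, hc.sum_map_star_antipode_star_apply ha hstar]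
    rw [← hreal', ← inner_neg_right, ← sum_star_counit_smul_antipode_star hb, map_sum, sum_inner]
    simp_rw [map_smul, inner_smul_left, starRingEnd_apply, star_star]
  have h₄ : ∑ i, ∑ k, ε (u k) * ε (v k) * ⟪c (𝑺 (star (z i))), c (y i)⟫_ℂ =
      ε b * cocycleGenerator c a := by
    rw [Finset.sum_comm]
    simp_rw [← Finset.mul_sum, ← Finset.sum_mul]
    rw [sum_counit_mul_counit_of_comul_eq hb, cocycleGenerator_eq_sum c ha]
  rw [h₁, h₂, h₃, h₄]
  ring

end IsCocycle

end Cocycle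

-- The paper's inner product `⟨u, v⟩` is linear in `u`; it equals Mathlib's `⟪v, u⟫_ℂ`.
theorem real_cocycle_generator_cond_negative_general
    {A : Type*} [Ring A] [HopfAlgebra ℂ A]
    [StarRing A] [StarModule ℂ A]
    -- `A` is a Hopf *-algebra:
    (hΔstar : ∀ (x : A) (m : ℕ) (y z : Fin m → A),
      Coalgebra.comul (R := ℂ) x = ∑ i, y i ⊗ₜ[ℂ] z i →
      Coalgebra.comul (R := ℂ) (star x) = ∑ i, star (y i) ⊗ₜ[ℂ] star (z i))
    (hεstar : ∀ x : A,
      Coalgebra.counit (R := ℂ) (star x) = starRingEnd ℂ (Coalgebra.counit (R := ℂ) x))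
    {H : Type*} [NormedAddCommGroup H] [InnerProductSpace ℂ H] [CompleteSpace H]
    (π : A →⋆ₐ[ℂ] (H →L[ℂ] H))
    (c : A →ₗ[ℂ] H)
    (hc : ∀ x y : A, c (x * y) = π x (c y) + Coalgebra.counit (R := ℂ) y • c x)
    -- `c` is a real cocycle: `⟨c(S(y*)), c((Sx)*)⟩ = ⟨c(x), c(y)⟩` for all `x, y ∈ A`
    (hreal : ∀ x y : A,
      ⟪c (star (antipode (R := ℂ) x)), c (antipode (R := ℂ) (star y))⟫_ℂ = ⟪c y, c x⟫_ℂ) :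
    c 1 = 0 ∧
      ∀ x : A, Coalgebra.counit (R := ℂ) x = 0 →
      ∀ (m : ℕ) (p q : Fin m → A),
        Coalgebra.comul (R := ℂ) (star x * x) = ∑ j, p j ⊗ₜ[ℂ] q j →
        ∑ j, ⟪c (antipode (R := ℂ) (star (q j))), c (p j)⟫_ℂ = -2 * (‖c x‖ ^ 2 : ℝ) := by
  have hc : IsCocycle π c := hc
  refine ⟨hc.map_one_eq_zero, fun x hx m p q hpq => ?_⟩
  rw [← cocycleGenerator_eq_sum c hpq, hc.cocycleGenerator_mul hΔstar hεstar hreal, hεstar, hx,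
    star_star, inner_self_eq_norm_sq_to_K]
  simp

theorem real_cocycle_generator_cond_negative
    {A : Type*} [Ring A] [HopfAlgebra ℂ A]
    [StarRing A] [StarModule ℂ A]
    -- `A` is a Hopf *-algebra:
    (hΔstar : ∀ (x : A) (m : ℕ) (y z : Fin m → A),
      Coalgebra.comul (R := ℂ) x = ∑ i, y i ⊗ₜ[ℂ] z i →
      Coalgebra.comul (R := ℂ) (star x) = ∑ i, star (y i) ⊗ₜ[ℂ] star (z i))
    (hεstar : ∀ x : A,
      Coalgebra.counit (R := ℂ) (star x) = starRingEnd ℂ (Coalgebra.counit (R := ℂ) x))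
    (hSstar : ∀ x : A, antipode (R := ℂ) (star (antipode (R := ℂ) (star x))) = x)
    {H : Type*} [NormedAddCommGroup H] [InnerProductSpace ℂ H] [CompleteSpace H]
    (π : A →⋆ₐ[ℂ] (H →L[ℂ] H))
    (c : A →ₗ[ℂ] H)
    (hc : ∀ x y : A, c (x * y) = π x (c y) + Coalgebra.counit (R := ℂ) y • c x)
    -- `c` is a real cocycle: `⟨c(S(y*)), c((Sx)*)⟩ = ⟨c(x), c(y)⟩` for all `x, y ∈ A`
    (hreal : ∀ x y : A,
      ⟪c (star (antipode (R := ℂ) x)), c (antipode (R := ℂ) (star y))⟫_ℂ = ⟪c y, c x⟫_ℂ) :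
    c 1 = 0 ∧
      ∀ x : A, Coalgebra.counit (R := ℂ) x = 0 →
      ∀ (m : ℕ) (p q : Fin m → A),
        Coalgebra.comul (R := ℂ) (star x * x) = ∑ j, p j ⊗ₜ[ℂ] q j →
        ∑ j, ⟪c (antipode (R := ℂ) (star (q j))), c (p j)⟫_ℂ = -2 * (‖c x‖ ^ 2 : ℝ) :=
  real_cocycle_generator_cond_negative_general hΔstar hεstar π c hc hreal
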